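/- arXiv:2010.03111 — 3 statements merged into one kernel-verified Lean document; each statement's English description precedes it below -/
import Mathlib

section
/- Let d, n be positive integers, X = [x_1, ..., x_n] with x_i ∈ ℝ^d, λ > 0, and y ∈ {-1,1}^n with y_i = -1 for some i and y_j = 1 for some j. Then the function h(β₀, β) = [∏_{i=1}^n exp(-V(y_i(β₀ + x_iᵀβ)))] · exp(-(λn/2)‖β‖₂²) is integrable over (β₀, β) ∈ ℝ × ℝ^d; hence, after normalization, it defines a proper probability density function (the Bayesian DWD posterior is proper). -/
/-!
Since `V ≥ 0` and `V u ≥ 1 - u`, one observation with label `-1` and one with label `+1` already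
bound the likelihood by `exp (-|β₀| + C ‖β‖)` with `C = ‖xᵢ‖ + ‖xⱼ‖`, all other factors being at
most `1`. The Gaussian prior `exp (-κ ‖β‖²)` absorbs `exp (C ‖β‖)`, so the posterior density is
dominated by the integrable function `exp (-|β₀|) · exp (C ‖β‖ - κ ‖β‖²)`.
-/

open MeasureTheory
open scoped RealInnerProductSpace

/-- The DWD loss function. -/
noncomputable def V (u : ℝ) : ℝ := if u ≤ 1/2 then 1 - u else 1/(4*u)

lemma V_nonneg (u : ℝ) : 0 ≤ V u := by
  unfold V
  split_ifs with h
  · linarith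
  · have : 0 < u := by linarith
    positivity

lemma one_sub_le_V (u : ℝ) : 1 - u ≤ V u := by
  unfold V
  split_ifs with h
  · rfl
  · have hu : 0 < u := by linarith
    rw [← sub_nonneg]
    have : 1 / (4 * u) - (1 - u) = (2 * u - 1) ^ 2 / (4 * u) := by field_simp; ring
    rw [this]
    positivity

@[fun_prop]
lemma measurable_V : Measurable V :=
  Measurable.ite measurableSet_Iic (by fun_prop) (by fun_prop)

lemma abs_sub_abs_sub_abs_le_V_add_V (b s t : ℝ) :
    |b| - |s| - |t| ≤ V (-(b + s)) + V (b + t) := by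
  have h₁ := one_sub_le_V (-(b + s))
  have h₂ := one_sub_le_V (b + t)
  have := V_nonneg (-(b + s))
  have := V_nonneg (b + t)
  cases abs_cases b <;> cases abs_cases s <;> cases abs_cases t <;> linarith

lemma prod_exp_neg_V_le {ι : Type*} [Fintype ι] (u : ι → ℝ) {i j : ι} (hij : i ≠ j) :
    ∏ k, Real.exp (-V (u k)) ≤ Real.exp (-(V (u i) + V (u j))) := by
  classical
  rw [← Real.exp_sum, Finset.sum_neg_distrib, Real.exp_le_exp, neg_le_neg_iff,
    ← Finset.sum_pair hij (f := fun k => V (u k))]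
  exact Finset.sum_le_sum_of_subset_of_nonneg (Finset.subset_univ _) fun k _ _ => V_nonneg _

lemma integrable_exp_neg_abs : Integrable (fun t : ℝ => Real.exp (-|t|)) := by
  rw [← integrableOn_univ, ← Set.Iic_union_Ioi (a := 0)]
  refine .union ((integrableOn_exp_Iic 0).congr_fun (fun t ht => ?_) measurableSet_Iic)
    ((exp_neg_integrableOn_Ioi 0 one_pos).congr_fun (fun t ht => ?_) measurableSet_Ioi)
  · rw [abs_of_nonpos ht, neg_neg]
  · simp only [abs_of_pos (Set.mem_Ioi.mp ht), neg_one_mul]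

section

variable {E : Type*} [NormedAddCommGroup E] [InnerProductSpace ℝ E]

lemma prod_exp_neg_V_le_exp_neg_abs {ι : Type*} [Fintype ι] (x : ι → E) (y : ι → ℝ)
    {i j : ι} (hi : y i = -1) (hj : y j = 1) (b : ℝ) (β : E) :
    ∏ k, Real.exp (-V (y k * (b + ⟪x k, β⟫))) ≤ Real.exp (-|b| + (‖x i‖ + ‖x j‖) * ‖β‖) := by
  have hij : i ≠ j := fun h => by norm_num [h, hj] at hi
  refine (prod_exp_neg_V_le _ hij).trans (Real.exp_le_exp.mpr ?_)
  have hs := abs_real_inner_le_norm (x i) β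
  have ht := abs_real_inner_le_norm (x j) β
  have := abs_sub_abs_sub_abs_le_V_add_V b ⟪x i, β⟫ ⟪x j, β⟫
  simp only [hi, hj, neg_one_mul, one_mul]
  nlinarith

variable [FiniteDimensional ℝ E] [MeasurableSpace E] [BorelSpace E]

lemma integrable_exp_neg_mul_sq_norm {b : ℝ} (hb : 0 < b) :
    Integrable (fun v : E => Real.exp (-b * ‖v‖ ^ 2)) :=
  Integrable.of_integral_ne_zero <| by
    rw [GaussianFourier.integral_rexp_neg_mul_sq_norm hb]
    positivity

lemma integrable_exp_mul_norm_sub_mul_sq_norm (C : ℝ) {κ : ℝ} (hκ : 0 < κ) :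
    Integrable (fun v : E => Real.exp (C * ‖v‖ - κ * ‖v‖ ^ 2)) := by
  refine ((integrable_exp_neg_mul_sq_norm (half_pos hκ)).const_mul
    (Real.exp (C ^ 2 / (2 * κ)))).mono' (by fun_prop) (ae_of_all _ fun v => ?_)
  rw [Real.norm_of_nonneg (Real.exp_pos _).le, ← Real.exp_add, Real.exp_le_exp]
  -- completing the square
  have : 0 ≤ (C - κ * ‖v‖) ^ 2 / (2 * κ) := by positivity
  have h : (C - κ * ‖v‖) ^ 2 / (2 * κ) = C ^ 2 / (2 * κ) - C * ‖v‖ + κ / 2 * ‖v‖ ^ 2 := by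
    field_simp; ring
  linarith

lemma integrable_exp_neg_abs_add_mul_norm_sub_mul_sq_norm (C : ℝ) {κ : ℝ} (hκ : 0 < κ) :
    Integrable (fun p : ℝ × E => Real.exp (-|p.1| + C * ‖p.2‖ - κ * ‖p.2‖ ^ 2)) := by
  simp only [add_sub_assoc, Real.exp_add]
  exact integrable_exp_neg_abs.mul_prod (integrable_exp_mul_norm_sub_mul_sq_norm C hκ)

end

theorem dwd_posterior_proper_general (d n : ℕ) (hn : 0 < n)
    (x : Fin n → EuclideanSpace ℝ (Fin d)) (lam : ℝ) (hlam : 0 < lam)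
    (y : Fin n → ℝ)
    (hneg : ∃ i, y i = -1) (hpos : ∃ j, y j = 1) :
    Integrable (fun p : ℝ × EuclideanSpace ℝ (Fin d) =>
      (∏ i, Real.exp (-V (y i * (p.1 + ⟪x i, p.2⟫)))) *
        Real.exp (-(lam * n / 2) * ‖p.2‖^2)) := by
  obtain ⟨i, hi⟩ := hneg
  obtain ⟨j, hj⟩ := hpos
  have hκ : 0 < lam * n / 2 := by positivity
  refine (integrable_exp_neg_abs_add_mul_norm_sub_mul_sq_norm (‖x i‖ + ‖x j‖) hκ).mono'
    (by fun_prop) (ae_of_all _ fun p => ?_)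
  rw [Real.norm_of_nonneg (by positivity), sub_eq_add_neg, Real.exp_add, ← neg_mul]
  exact mul_le_mul_of_nonneg_right (prod_exp_neg_V_le_exp_neg_abs x y hi hj p.1 p.2)
    (Real.exp_pos _).le

/-- the unnormalized Bayesian DWD posterior density
`h(β₀, β) = [∏ᵢ exp(-V(yᵢ(β₀ + xᵢᵀβ)))] · exp(-(λn/2)‖β‖₂²)` is integrable over
`(β₀, β) ∈ ℝ × ℝ^d`, hence defines a proper probability density after
normalization. -/
theorem dwd_posterior_proper (d n : ℕ) (hd : 0 < d) (hn : 0 < n)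
    (x : Fin n → EuclideanSpace ℝ (Fin d)) (lam : ℝ) (hlam : 0 < lam)
    (y : Fin n → ℝ) (hy : ∀ i, y i = -1 ∨ y i = 1)
    (hneg : ∃ i, y i = -1) (hpos : ∃ j, y j = 1) :
    Integrable (fun p : ℝ × EuclideanSpace ℝ (Fin d) =>
      (∏ i, Real.exp (-V (y i * (p.1 + ⟪x i, p.2⟫)))) *
        Real.exp (-(lam * n / 2) * ‖p.2‖^2)) :=
  dwd_posterior_proper_general d n hn x lam hlam y hneg hpos
end

section
/- The Bayesian DWD link function σ(u) = exp(-V(u)) / (exp(-V(u)) + exp(-V(-u))) is strictly increasing on ℝ. -/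
/-- The Bayesian DWD link function (class-1 probability of a score `u` under
equal class proportions). -/
noncomputable def dwdLink (u : ℝ) : ℝ :=
  Real.exp (-V u) / (Real.exp (-V u) + Real.exp (-V (-u)))

/-!
Dividing numerator and denominator by `exp (-V u)` shows `dwdLink u = sigmoid (V (-u) - V u)`.
The loss `V` is strictly decreasing (its two pieces meet at `1/2`), so `V (-u) - V u` is strictly
increasing, and so is its composition with the sigmoid. Only the strict antitonicity of the loss
enters.
-/

open Real Set

noncomputable def bayesLink (φ : ℝ → ℝ) (u : ℝ) : ℝ :=
  exp (-φ u) / (exp (-φ u) + exp (-φ (-u)))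

lemma exp_neg_div_exp_neg_add_exp_neg (a b : ℝ) :
    exp (-a) / (exp (-a) + exp (-b)) = sigmoid (b - a) := by
  rw [sigmoid_def, neg_sub, exp_sub, exp_neg a, exp_neg b]
  field_simp

lemma bayesLink_eq_sigmoid_comp (φ : ℝ → ℝ) :
    bayesLink φ = sigmoid ∘ fun u => φ (-u) - φ u :=
  funext fun _ => exp_neg_div_exp_neg_add_exp_neg _ _

lemma StrictAnti.bayesLink_strictMono {φ : ℝ → ℝ} (hφ : StrictAnti φ) :
    StrictMono (bayesLink φ) := by
  have hgap : StrictMono fun u => φ (-u) - φ u :=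
    (hφ.comp fun _ _ h => neg_lt_neg h).add hφ.neg
  rw [bayesLink_eq_sigmoid_comp]
  exact sigmoid_strictMono.comp hgap

lemma V_of_half_le {u : ℝ} (hu : 1/2 ≤ u) : V u = 1/(4*u) := by
  rcases hu.eq_or_lt with rfl | hu
  · norm_num [V]
  · exact if_neg hu.not_ge

lemma V_strictAnti : StrictAnti V := by
  refine StrictAntiOn.Iic_union_Ici (a := 1/2) ?_ ?_
  · intro a ha b hb hab
    simp only [V, if_pos (mem_Iic.1 ha), if_pos (mem_Iic.1 hb)]
    linarith
  · intro a ha b hb hab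
    rw [V_of_half_le ha, V_of_half_le hb]
    exact one_div_lt_one_div_of_lt (by linarith [mem_Ici.1 ha]) (by linarith)

/-- the Bayesian DWD link function is strictly increasing on `ℝ`. -/
theorem dwdLink_strictMono : StrictMono dwdLink :=
  V_strictAnti.bayesLink_strictMono
end

section
/- The Bayesian DWD link function σ(u) = exp(-V(u)) / (exp(-V(u)) + exp(-V(-u))) is continuously differentiable on ℝ (a smooth link function, comparable to a probit or logit link). -/
/-!
`V` is glued at `1/2` from `1 - u` and `1/(4u)`, whose values (`1/2`) and slopes (`-1`) agree
there, so `V` is `C¹`; the link is then a quotient of `C¹` functions with positive denominator.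
-/

open Set

section Gluing

variable {E : Type*} [NormedAddCommGroup E] [NormedSpace ℝ E]
  {f g f' g' : ℝ → E} {a : ℝ}

theorem hasDerivAt_if_le (hf : ∀ x ≤ a, HasDerivAt f (f' x) x)
    (hg : ∀ x, a ≤ x → HasDerivAt g (g' x) x) (hfg : f a = g a) (hfg' : f' a = g' a) (x : ℝ) :
    HasDerivAt (fun y => if y ≤ a then f y else g y) (if x ≤ a then f' x else g' x) x := by
  have hleft : HasDerivWithinAt (fun y => if y ≤ a then f y else g y)
      (if x ≤ a then f' x else g' x) (Iic a) x := by
    by_cases hx : x ≤ a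
    · rw [if_pos hx]
      exact (hf x hx).hasDerivWithinAt.congr (fun y hy => if_pos hy) (if_pos hx)
    · exact HasFDerivWithinAt.of_notMem_closure (by rwa [closure_Iic, mem_Iic])
  have hright : HasDerivWithinAt (fun y => if y ≤ a then f y else g y)
      (if x ≤ a then f' x else g' x) (Ici a) x := by
    have hFg : EqOn (fun y => if y ≤ a then f y else g y) g (Ici a) := by
      intro y (hy : a ≤ y)
      show (if y ≤ a then f y else g y) = g y
      split_ifs with hya
      · rw [le_antisymm hya hy, hfg]
      · rfl
    by_cases hx : a ≤ x
    · have hd : (if x ≤ a then f' x else g' x) = g' x := by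
        split_ifs with hxa
        · rw [le_antisymm hxa hx, hfg']
        · rfl
      rw [hd]
      exact (hg x hx).hasDerivWithinAt.congr hFg (hFg hx)
    · exact HasFDerivWithinAt.of_notMem_closure (by rwa [closure_Ici, mem_Ici])
  simpa only [Iic_union_Ici, hasDerivWithinAt_univ] using hleft.union hright

theorem contDiff_one_if_le (hf : ∀ x ≤ a, HasDerivAt f (f' x) x)
    (hg : ∀ x, a ≤ x → HasDerivAt g (g' x) x) (hf' : ContinuousOn f' (Iic a))
    (hg' : ContinuousOn g' (Ici a)) (hfg : f a = g a) (hfg' : f' a = g' a) :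
    ContDiff ℝ 1 fun y => if y ≤ a then f y else g y := by
  have hderiv := hasDerivAt_if_le hf hg hfg hfg'
  rw [contDiff_one_iff_deriv, funext fun x => (hderiv x).deriv]
  exact ⟨fun x => (hderiv x).differentiableAt,
    continuous_if_le continuous_id continuous_const hf' hg' fun x hx => hx ▸ hfg'⟩

end Gluing

theorem hasDerivAt_one_div_four_mul {x : ℝ} (hx : x ≠ 0) :
    HasDerivAt (fun y : ℝ => 1 / (4 * y)) (-1 / (4 * x ^ 2)) x := by
  rw [show (fun y : ℝ => 1 / (4 * y)) = fun y => 1 / 4 * y⁻¹ by ext; ring]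
  exact ((hasDerivAt_inv hx).const_mul _).congr_deriv (by field_simp)

theorem contDiff_V : ContDiff ℝ 1 V := by
  refine contDiff_one_if_le (f' := fun _ => -1) (g' := fun x => -1 / (4 * x ^ 2))
    (fun x _ => by simpa using (hasDerivAt_id x).const_sub 1)
    (fun x hx => hasDerivAt_one_div_four_mul (by linarith)) continuousOn_const ?_
    (by norm_num) (by norm_num)
  exact continuousOn_const.div (by fun_prop) fun x (hx : 1/2 ≤ x) => by positivity

/-- the Bayesian DWD link function is continuously
differentiable on `ℝ`. -/
theorem dwdLink_contDiff : ContDiff ℝ 1 dwdLink := by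
  have hnum : ContDiff ℝ 1 fun u => Real.exp (-V u) := Real.contDiff_exp.comp contDiff_V.neg
  have hden : ContDiff ℝ 1 fun u => Real.exp (-V (-u)) := hnum.comp contDiff_neg
  exact hnum.div (hnum.add hden) fun u => by positivity
end
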